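/- arXiv:1909.04439 — 3 statements merged into one kernel-verified Lean document; each statement's English description precedes it below -/
import Mathlib

section
/- For every initial configuration X^0 ∈ ℝ^N there exists exactly one C¹ solution x : [0,∞) → ℝ^N of the first-order singular Cucker–Smale system with x(0) = X^0; i.e., a C¹ solution exists, and any two C¹ solutions of the system with the same initial data coincide for all t ≥ 0. -/
/-!
Since `Ψ` is odd and nondecreasing, the Cucker–Smale field `F` is dissipative:
`∑ i, (p i - q i) * (F p i - F q i) ≤ 0`. Hence if `u` and `v` follow two fields, one of them
dissipative and the two within `ε` of each other, `W = ∑ i, (u i - v i) ^ 2` satisfies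
`W' ≤ ε (W + N)`, and Grönwall gives `W t ≤ N (exp (ε t) - 1)`. With `ε = 0` this is uniqueness.

For existence, `Ψ` is replaced by odd nondecreasing Lipschitz functions `psiReg β δ`, uniformly
within `δ ^ (1 - β) / (1 - β)` of `Ψ`. The regularized systems have global solutions
(Picard–Lindelöf with a uniform time step), which by the estimate above are uniformly Cauchy on
bounded time intervals as `δ → 0`. As `Ψ` is Hölder continuous, the derivatives converge
uniformly too, so the limit solves the singular system.
-/

open Real Filter Set

/-- The interaction function `Ψ(x) = sign(x)·|x|^{1−β}/(1−β)`. -/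
noncomputable def psiCS (β y : ℝ) : ℝ := Real.sign y * |y| ^ (1 - β) / (1 - β)

/-- A C¹ solution on `[0,∞)` of the first-order singular Cucker–Smale system:
`x_i'(t) = ν_i + (κ/N) Σ_k Ψ(x_k(t) − x_i(t))`. -/
def IsCSSol (N : ℕ) (β κ : ℝ) (ν : Fin N → ℝ) (x : ℝ → Fin N → ℝ) : Prop :=
  (∀ i, ContDiffOn ℝ 1 (fun t => x t i) (Set.Ici 0)) ∧
  ∀ i, ∀ t ≥ (0:ℝ), HasDerivWithinAt (fun s => x s i)
    (ν i + (κ / (N:ℝ)) * ∑ k, psiCS β (x t k - x t i)) (Set.Ici 0) t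

open scoped NNReal Topology

section Chain

variable {E : Type*}

/-- With `g a T` a solution on `[T, T + h]` starting from `a` at time `T`, the `n`-th curve
follows such pieces on `[0, h], [h, 2h], …, [n h, (n + 1) h]`, each starting where the previous
one ended. -/
noncomputable def chainCurve (g : E → ℝ → ℝ → E) (h : ℝ) (x₀ : E) : ℕ → ℝ → E
  | 0 => g x₀ 0
  | n + 1 => fun t => if t ≤ (n + 1) * h then chainCurve g h x₀ n t
      else g (chainCurve g h x₀ n ((n + 1) * h)) ((n + 1) * h) t

variable {g : E → ℝ → ℝ → E} {h : ℝ} {x₀ : E}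

lemma chainCurve_eq_of_le {m n : ℕ} (hmn : m ≤ n) (hh : 0 ≤ h) {t : ℝ}
    (ht : t ≤ (m + 1) * h) : chainCurve g h x₀ n t = chainCurve g h x₀ m t := by
  induction n, hmn using Nat.le_induction with
  | base => rfl
  | succ n hmn ih =>
    have : t ≤ (n + 1) * h := ht.trans (mul_le_mul_of_nonneg_right (by simp [hmn]) hh)
    simp only [chainCurve]
    rw [if_pos this, ih]

lemma chainCurve_eq_chainCurve (hh : 0 ≤ h) {m n : ℕ} {t : ℝ} (hm : t ≤ (m + 1) * h)
    (hn : t ≤ (n + 1) * h) : chainCurve g h x₀ m t = chainCurve g h x₀ n t := by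
  rcases le_total m n with hmn | hnm
  · exact (chainCurve_eq_of_le hmn hh hm).symm
  · exact chainCurve_eq_of_le hnm hh hn

end Chain

section GlobalExistence

variable {E : Type*} [NormedAddCommGroup E] [NormedSpace ℝ E]

lemma IsIntegralCurveOn.piecewise_Icc {v : ℝ → E → E} {γ₁ γ₂ : ℝ → E} {a b c : ℝ}
    (h₁ : IsIntegralCurveOn γ₁ v (Icc a b)) (h₂ : IsIntegralCurveOn γ₂ v (Icc b c))
    (hb : γ₁ b = γ₂ b) (hab : a ≤ b) (hbc : b ≤ c) :
    IsIntegralCurveOn (fun t => if t ≤ b then γ₁ t else γ₂ t) v (Icc a c) := by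
  set γ : ℝ → E := fun t => if t ≤ b then γ₁ t else γ₂ t
  have e₁ : EqOn γ γ₁ (Icc a b) := fun t ht => if_pos ht.2
  have e₂ : EqOn γ γ₂ (Icc b c) := fun t ht => by
    rcases ht.1.eq_or_lt with rfl | hlt
    · simp [γ, hb]
    · simp [γ, not_le.2 hlt]
  intro t _
  rw [← Icc_union_Icc_eq_Icc hab hbc]
  -- away from the closure of a piece, the derivative within that piece holds vacuously
  refine HasDerivWithinAt.union ?_ ?_
  · by_cases ht : t ∈ Icc a b
    · rw [e₁ ht]; exact (h₁ t ht).congr e₁ (e₁ ht)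
    · exact HasFDerivWithinAt.of_notMem_closure (by rwa [closure_Icc])
  · by_cases ht : t ∈ Icc b c
    · rw [e₂ ht]; exact (h₂ t ht).congr e₂ (e₂ ht)
    · exact HasFDerivWithinAt.of_notMem_closure (by rwa [closure_Icc])

variable {g : E → ℝ → ℝ → E} {h : ℝ} {x₀ : E} {v : ℝ → E → E}

lemma isIntegralCurveOn_chainCurve (hh : 0 ≤ h) (hg₀ : ∀ a T, g a T T = a)
    (hg : ∀ a T, IsIntegralCurveOn (g a T) v (Icc T (T + h))) (n : ℕ) :
    IsIntegralCurveOn (chainCurve g h x₀ n) v (Icc 0 ((n + 1) * h)) := by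
  induction n with
  | zero => simpa [chainCurve] using hg x₀ 0
  | succ n ih =>
    have := ih.piecewise_Icc (hg _ ((n + 1) * h)) (hg₀ _ _).symm (by positivity) (by linarith)
    simpa [chainCurve, add_mul] using this

lemma isIntegralCurveOn_Ici_chainCurve (hh : 0 < h) (hg₀ : ∀ a T, g a T T = a)
    (hg : ∀ a T, IsIntegralCurveOn (g a T) v (Icc T (T + h))) :
    IsIntegralCurveOn (fun t => chainCurve g h x₀ ⌊t / h⌋₊ t) v (Ici 0) := by
  have hlt : ∀ t, t < (⌊t / h⌋₊ + 1) * h := fun t =>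
    (div_lt_iff₀ hh).1 (Nat.lt_floor_add_one _)
  intro t ht
  set n := ⌊t / h⌋₊
  have heq : EqOn (fun s => chainCurve g h x₀ ⌊s / h⌋₊ s) (chainCurve g h x₀ n)
      (Icc 0 ((n + 1) * h)) :=
    fun s hs => chainCurve_eq_chainCurve hh.le (hlt s).le hs.2
  have hmem : Icc 0 ((n + 1) * h) ∈ 𝓝[Ici 0] t :=
    Ici_inter_Iic (a := (0 : ℝ)) ▸ inter_mem_nhdsWithin _ (Iic_mem_nhds (hlt t))
  have htn : t ∈ Icc 0 ((n + 1) * h) := ⟨ht, (hlt t).le⟩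
  have := (isIntegralCurveOn_chainCurve hh.le hg₀ hg n t htn).congr heq (heq htn)
  rw [← heq htn] at this
  exact this.mono_of_mem_nhdsWithin hmem

lemma exists_isIntegralCurveOn_Icc_of_lipschitzWith [CompleteSpace E] {F : E → E} {K : ℝ≥0}
    (hF : LipschitzWith K F) (a : E) (T : ℝ) :
    ∃ γ : ℝ → E, γ T = a ∧
      IsIntegralCurveOn γ (fun _ => F) (Icc T (T + ((K : ℝ) + 1)⁻¹)) := by
  have hh : (0 : ℝ) ≤ ((K : ℝ) + 1)⁻¹ := by positivity
  -- on the ball of radius `‖F a‖` around `a` the field is bounded by `(K + 1) ‖F a‖`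
  have hpl : IsPicardLindelof (fun _ => F) (tmin := T) (tmax := T + ((K : ℝ) + 1)⁻¹)
      ⟨T, le_rfl, by linarith⟩ a ‖F a‖₊ 0 ((K + 1) * ‖F a‖₊) K := by
    refine .of_time_independent (fun x hx => ?_) hF.lipschitzOnWith ?_
    · have hxa : ‖x - a‖ ≤ ‖F a‖ := by simpa [dist_eq_norm] using hx
      calc ‖F x‖ ≤ ‖F a‖ + ‖F x - F a‖ := norm_le_norm_add_norm_sub' _ _
        _ ≤ ‖F a‖ + K * ‖x - a‖ := by gcongr; simpa [dist_eq_norm] using hF.dist_le_mul x a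
        _ ≤ ((K + 1) * ‖F a‖₊ : ℝ≥0) := by push_cast; nlinarith [K.coe_nonneg]
    · push_cast
      rw [add_sub_cancel_left, sub_self, max_eq_left hh, sub_zero, mul_comm, ← mul_assoc,
        inv_mul_cancel₀ (by positivity), one_mul]
  exact hpl.exists_eq_forall_mem_Icc_hasDerivWithinAt₀

theorem exists_isIntegralCurveOn_Ici_of_lipschitzWith [CompleteSpace E] {F : E → E} {K : ℝ≥0}
    (hF : LipschitzWith K F) (x₀ : E) :
    ∃ γ : ℝ → E, γ 0 = x₀ ∧ IsIntegralCurveOn γ (fun _ => F) (Ici 0) := by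
  choose g hg₀ hg using exists_isIntegralCurveOn_Icc_of_lipschitzWith hF
  refine ⟨fun t => chainCurve g ((K : ℝ) + 1)⁻¹ x₀ ⌊t / ((K : ℝ) + 1)⁻¹⌋₊ t, ?_,
    isIntegralCurveOn_Ici_chainCurve (by positivity) hg₀ hg⟩
  simp [chainCurve, hg₀]

end GlobalExistence

section Dissipative

variable {ι : Type*} [Fintype ι]

def Dissipative (F : (ι → ℝ) → ι → ℝ) : Prop :=
  ∀ p q : ι → ℝ, ∑ i, (p i - q i) * (F p i - F q i) ≤ 0

theorem sum_sq_sub_le_of_dissipative {F G : (ι → ℝ) → ι → ℝ} {u v : ℝ → ι → ℝ} {ε : ℝ}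
    (hF : Dissipative F) (hFG : ∀ x i, |F x i - G x i| ≤ ε)
    (hu : IsIntegralCurveOn u (fun _ => F) (Ici 0))
    (hv : IsIntegralCurveOn v (fun _ => G) (Ici 0)) (h0 : u 0 = v 0) {t : ℝ} (ht : 0 ≤ t) :
    ∑ i, (u t i - v t i) ^ 2 ≤ Fintype.card ι * (exp (ε * t) - 1) := by
  set W : ℝ → ℝ := fun s => ∑ i, (u s i - v s i) ^ 2 + Fintype.card ι
  set W' : ℝ → ℝ := fun s => ∑ i, 2 * (u s i - v s i) * (F (u s) i - G (v s) i)
  have hW : ∀ s ∈ Ici (0 : ℝ), HasDerivWithinAt W (W' s) (Ici 0) s := by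
    intro s hs
    have hw i := ((hasDerivWithinAt_pi.1 (hu s hs) i).fun_sub
      (hasDerivWithinAt_pi.1 (hv s hs) i)).fun_pow 2
    refine ((HasDerivWithinAt.fun_sum fun i _ => hw i).add_const _).congr_deriv ?_
    simp only [W', Nat.cast_ofNat]
    exact Finset.sum_congr rfl fun i _ => by ring
  -- the dissipative part of `W'` is nonpositive, the perturbation costs at most `ε (w² + 1)`
  have hW' : ∀ s, W' s ≤ ε * W s := by
    intro s
    have hsplit : W' s = 2 * ∑ i, (u s i - v s i) * (F (u s) i - F (v s) i)
        + ∑ i, 2 * (u s i - v s i) * (F (v s) i - G (v s) i) := by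
      simp only [W', Finset.mul_sum, ← Finset.sum_add_distrib]
      exact Finset.sum_congr rfl fun i _ => by ring
    have herr : ∀ i, 2 * (u s i - v s i) * (F (v s) i - G (v s) i)
        ≤ ε * ((u s i - v s i) ^ 2 + 1) := by
      intro i
      obtain ⟨h₁, h₂⟩ := abs_le.1 (hFG (v s) i)
      nlinarith [sq_nonneg (u s i - v s i - 1), sq_nonneg (u s i - v s i + 1)]
    calc W' s ≤ ∑ i, ε * ((u s i - v s i) ^ 2 + 1) := by
          rw [hsplit]
          linarith [hF (u s) (v s), Finset.sum_le_sum fun i (_ : i ∈ Finset.univ) => herr i]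
      _ = ε * W s := by simp [W, Finset.mul_sum, Finset.sum_add_distrib, mul_add, mul_comm]
  have hslope : ∀ s ∈ Ico 0 t, ∀ r, W' s < r →
      ∃ᶠ z in 𝓝[>] s, (z - s)⁻¹ * (W z - W s) < r := fun s hs r hr => by
    simpa [slope_def_field, div_eq_inv_mul] using
      ((hW s hs.1).mono (Ici_subset_Ici.2 hs.1)).liminf_right_slope_le hr
  have := le_gronwallBound_of_liminf_deriv_right_le (δ := Fintype.card ι) (ε := 0)
    (fun s hs => (hW s hs.1).continuousWithinAt.mono Icc_subset_Ici_self) hslope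
    (by simp [W, h0]) (fun s _ => by simpa using hW' s) t ⟨ht, le_rfl⟩
  rw [gronwallBound_ε0, sub_zero] at this
  simp only [W] at this
  linarith

theorem uniformCauchySeqOn_Icc_of_dissipative {F : ℕ → (ι → ℝ) → ι → ℝ}
    {u : ℕ → ℝ → ι → ℝ} {x₀ : ι → ℝ} (hdiss : ∀ n, Dissipative (F n))
    (hF : UniformCauchySeqOn F atTop univ)
    (hu : ∀ n, IsIntegralCurveOn (u n) (fun _ => F n) (Ici 0)) (hu₀ : ∀ n, u n 0 = x₀)
    (T : ℝ) : UniformCauchySeqOn u atTop (Icc 0 T) := by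
  rw [Metric.uniformCauchySeqOn_iff]
  intro ε hε
  have hcont : Tendsto (fun r => Fintype.card ι * (exp (r * T) - 1)) (𝓝 0) (𝓝 0) := by
    have : Continuous fun r => (Fintype.card ι : ℝ) * (exp (r * T) - 1) := by fun_prop
    simpa using this.tendsto 0
  obtain ⟨ρ, hρ, hρε⟩ := (hcont.eventually (gt_mem_nhds (pow_pos hε 2))).exists_gt
  obtain ⟨M, hM⟩ := Metric.uniformCauchySeqOn_iff.1 hF ρ hρ
  refine ⟨M, fun m hm n hn t ht => (dist_pi_lt_iff hε).2 fun i => ?_⟩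
  have hFmn : ∀ x j, |F m x j - F n x j| ≤ ρ := fun x j =>
    (dist_le_pi_dist _ _ j).trans (hM m hm n hn x (mem_univ x)).le
  have hsum :=
    sum_sq_sub_le_of_dissipative (hdiss m) hFmn (hu m) (hu n) (by rw [hu₀, hu₀]) ht.1
  have hexp : exp (ρ * t) ≤ exp (ρ * T) := exp_le_exp.2 (by gcongr; exact ht.2)
  rw [Real.dist_eq]
  refine abs_lt_of_sq_lt_sq ?_ hε.le
  calc (u m t i - u n t i) ^ 2 ≤ ∑ j, (u m t j - u n t j) ^ 2 :=
        Finset.single_le_sum (fun j _ => sq_nonneg (u m t j - u n t j)) (Finset.mem_univ i)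
    _ ≤ Fintype.card ι * (exp (ρ * T) - 1) := hsum.trans (by gcongr)
    _ < ε ^ 2 := hρε

end Dissipative

theorem exists_tendstoUniformlyOn_Icc {E : Type*} [UniformSpace E] [CompleteSpace E]
    {u : ℕ → ℝ → E} (h : ∀ T, UniformCauchySeqOn u atTop (Icc 0 T)) :
    ∃ x : ℝ → E, ∀ T, TendstoUniformlyOn u x atTop (Icc 0 T) := by
  have : Nonempty E := ⟨u 0 0⟩
  exact ⟨fun t => limUnder atTop fun n => u n t, fun T =>
    (h T).tendstoUniformlyOn_of_tendsto fun _ ht => ((h T).cauchySeq ht).tendsto_limUnder⟩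

theorem TendstoUniformlyOn.comp_of_tendstoUniformly {α β γ ι : Type*} [PseudoMetricSpace β]
    [PseudoMetricSpace γ] {l : Filter ι} {s : Set α} {F : β → γ} {Fn : ι → β → γ}
    {u : ι → α → β} {x : α → β} (hF : UniformContinuous F) (hFn : TendstoUniformly Fn F l)
    (hux : TendstoUniformlyOn u x l s) :
    TendstoUniformlyOn (fun n t => Fn n (u n t)) (fun t => F (x t)) l s := by
  rw [Metric.tendstoUniformlyOn_iff] at hux ⊢
  rw [Metric.tendstoUniformly_iff] at hFn
  intro ε hε
  have hFu := Metric.tendstoUniformlyOn_iff.1 (hF.comp_tendstoUniformlyOn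
    (Metric.tendstoUniformlyOn_iff.2 hux)) (ε / 2) (half_pos hε)
  filter_upwards [hFu, hFn (ε / 2) (half_pos hε)] with n h₁ h₂ t ht
  calc dist (F (x t)) (Fn n (u n t))
        ≤ dist (F (x t)) (F (u n t)) + dist (F (u n t)) (Fn n (u n t)) := dist_triangle _ _ _
    _ < ε / 2 + ε / 2 := add_lt_add (h₁ t ht) (h₂ _)
    _ = ε := add_halves ε

theorem isIntegralCurveOn_Ici_of_tendstoUniformlyOn {E : Type*} [NormedAddCommGroup E]
    [NormedSpace ℝ E] {F : E → E} {Fn : ℕ → E → E} {u : ℕ → ℝ → E} {x : ℝ → E}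
    (hF : UniformContinuous F) (hFn : TendstoUniformly Fn F atTop)
    (hu : ∀ n, IsIntegralCurveOn (u n) (fun _ => Fn n) (Ici 0))
    (hux : ∀ T, TendstoUniformlyOn u x atTop (Icc 0 T)) :
    IsIntegralCurveOn x (fun _ => F) (Ici 0) := by
  have hcont : ContinuousOn x (Ici 0) := fun t ht =>
    (((hux (t + 1)).continuousOn (Frequently.of_forall fun n =>
      (hu n).continuousOn.mono Icc_subset_Ici_self)) t ⟨ht, by linarith⟩).mono_of_mem_nhdsWithin
        (Ici_inter_Iic (a := (0 : ℝ)) ▸ inter_mem_nhdsWithin _ (Iic_mem_nhds (lt_add_one t)))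
  have hpos : ∀ t > 0, HasDerivAt x (F (x t)) t := fun t ht =>
    hasDerivAt_of_tendstoUniformlyOn isOpen_Ioo
      (((hux (t + 1)).comp_of_tendstoUniformly hF hFn).mono Ioo_subset_Icc_self)
      (Eventually.of_forall fun n s hs => (hu n s hs.1.le).hasDerivAt (Ici_mem_nhds hs.1))
      (fun s hs => (hux (t + 1)).tendsto_at (Ioo_subset_Icc_self hs)) ⟨ht, lt_add_one t⟩
  intro t ht
  rcases (mem_Ici.1 ht).eq_or_lt with rfl | ht
  · -- at the endpoint, use that the derivative `F ∘ x` extends continuously to `0`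
    have hlim : Tendsto (fun s => F (x s)) (𝓝[>] 0) (𝓝 (F (x 0))) :=
      ((hF.continuous.continuousAt.comp_continuousWithinAt (hcont 0 ht)).mono
        Ioi_subset_Ici_self).tendsto
    exact hasDerivWithinAt_Ici_of_tendsto_deriv
      (fun s hs => (hpos s hs).differentiableAt.differentiableWithinAt)
      ((hcont 0 ht).mono Ioi_subset_Ici_self) self_mem_nhdsWithin
      (hlim.congr' (eventually_nhdsWithin_of_forall fun s hs => (hpos s hs).deriv.symm))
  · exact (hpos t ht).hasDerivWithinAt

theorem exists_isIntegralCurveOn_Ici_of_dissipative_approx {ι : Type*} [Fintype ι]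
    {F : (ι → ℝ) → ι → ℝ} {Fn : ℕ → (ι → ℝ) → ι → ℝ} {K : ℕ → ℝ≥0}
    (hF : UniformContinuous F) (hFn : TendstoUniformly Fn F atTop)
    (hlip : ∀ n, LipschitzWith (K n) (Fn n)) (hdiss : ∀ n, Dissipative (Fn n)) (x₀ : ι → ℝ) :
    ∃ x : ℝ → ι → ℝ, x 0 = x₀ ∧ IsIntegralCurveOn x (fun _ => F) (Ici 0) := by
  choose u hu₀ hu using fun n => exists_isIntegralCurveOn_Ici_of_lipschitzWith (hlip n) x₀
  obtain ⟨x, hx⟩ := exists_tendstoUniformlyOn_Icc fun T =>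
    uniformCauchySeqOn_Icc_of_dissipative hdiss
      (tendstoUniformlyOn_univ.2 hFn).uniformCauchySeqOn hu hu₀ T
  refine ⟨x, ?_, isIntegralCurveOn_Ici_of_tendstoUniformlyOn hF hFn hu hx⟩
  exact tendsto_nhds_unique ((hx 0).tendsto_at ⟨le_rfl, le_rfl⟩) (by simp [hu₀])

section MaxRpow

variable {p δ : ℝ}

lemma monotone_max_rpow (hδ : 0 ≤ δ) (hp : 0 ≤ p) : Monotone fun y : ℝ => max y δ ^ p :=
  fun _ _ hab => rpow_le_rpow (hδ.trans (le_max_right _ _)) (max_le_max hab le_rfl) hp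

lemma max_rpow_sub_max_zero_rpow_mem_Icc (hδ : 0 ≤ δ) (hp : 0 ≤ p) (y : ℝ) :
    max y δ ^ p - max y 0 ^ p ∈ Icc 0 (δ ^ p) := by
  rcases le_total y δ with hyδ | hδy
  · have hle : max y 0 ^ p ≤ δ ^ p := rpow_le_rpow (le_max_right _ _) (max_le hyδ hδ) hp
    rw [max_eq_right hyδ]
    exact ⟨by linarith, by linarith [rpow_nonneg (le_max_right y 0) p]⟩
  · rw [max_eq_left hδy, max_eq_left (hδ.trans hδy), sub_self]
    exact ⟨le_rfl, rpow_nonneg hδ p⟩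

lemma abs_rpow_sub_rpow_le {a b : ℝ} (ha : 0 ≤ a) (hb : 0 ≤ b) (hp0 : 0 ≤ p) (hp1 : p ≤ 1) :
    |a ^ p - b ^ p| ≤ |a - b| ^ p := by
  wlog hba : b ≤ a generalizing a b
  · rw [abs_sub_comm, abs_sub_comm a]
    exact this hb ha (le_of_not_ge hba)
  have hsub : a ^ p ≤ b ^ p + (a - b) ^ p := by
    simpa using rpow_add_le_add_rpow hb (sub_nonneg.2 hba) hp0 hp1
  rw [abs_of_nonneg (sub_nonneg.2 (rpow_le_rpow hb hba hp0)), abs_of_nonneg (sub_nonneg.2 hba)]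
  linarith

lemma uniformContinuous_max_rpow (hδ : 0 ≤ δ) (hp0 : 0 < p) (hp1 : p ≤ 1) :
    UniformContinuous fun y : ℝ => max y δ ^ p := by
  rw [Metric.uniformContinuous_iff]
  refine fun ε hε => ⟨ε ^ p⁻¹, rpow_pos_of_pos hε _, fun {a b} hab => ?_⟩
  rw [Real.dist_eq] at hab ⊢
  calc |max a δ ^ p - max b δ ^ p| ≤ |max a δ - max b δ| ^ p :=
        abs_rpow_sub_rpow_le (hδ.trans (le_max_right _ _)) (hδ.trans (le_max_right _ _)) hp0.le hp1
    _ ≤ |a - b| ^ p := rpow_le_rpow (abs_nonneg _) (abs_max_sub_max_le_abs a b δ) hp0.le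
    _ < (ε ^ p⁻¹) ^ p := rpow_lt_rpow (abs_nonneg _) hab hp0
    _ = ε := rpow_inv_rpow hε.le hp0.ne'

lemma abs_max_rpow_sub_max_rpow_le (hδ : 0 < δ) (hp0 : 0 ≤ p) (hp1 : p ≤ 1) (a b : ℝ) :
    |max a δ ^ p - max b δ ^ p| ≤ p * δ ^ (p - 1) * |a - b| := by
  have hderiv : ∀ x ∈ Ici δ, HasDerivWithinAt (fun x : ℝ => x ^ p) (p * x ^ (p - 1)) (Ici δ) x :=
    fun x hx => (hasDerivAt_rpow_const (Or.inl (hδ.trans_le hx).ne')).hasDerivWithinAt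
  have hbound : ∀ x ∈ Ici δ, ‖p * x ^ (p - 1)‖ ≤ p * δ ^ (p - 1) := fun x hx => by
    rw [Real.norm_eq_abs, abs_of_nonneg (mul_nonneg hp0 (rpow_nonneg (hδ.le.trans hx) _))]
    exact mul_le_mul_of_nonneg_left (rpow_le_rpow_of_nonpos hδ hx (by linarith)) hp0
  calc |max a δ ^ p - max b δ ^ p| ≤ p * δ ^ (p - 1) * |max a δ - max b δ| :=
        (convex_Ici δ).norm_image_sub_le_of_norm_hasDerivWithin_le hderiv hbound
          (le_max_right b δ) (le_max_right a δ)
    _ ≤ p * δ ^ (p - 1) * |a - b| :=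
        mul_le_mul_of_nonneg_left (abs_max_sub_max_le_abs a b δ)
          (mul_nonneg hp0 (rpow_nonneg hδ.le _))

end MaxRpow

section PsiReg

/-- `psiReg β δ` vanishes on `[-δ, δ]` and equals `psiCS β y ∓ psiCS β δ` for `±y > δ`;
`psiReg β 0 = psiCS β`. -/
noncomputable def psiReg (β δ y : ℝ) : ℝ := (max y δ ^ (1 - β) - max (-y) δ ^ (1 - β)) / (1 - β)

variable {β δ : ℝ}

lemma psiCS_eq_psiReg_zero (hβ : β ≠ 1) : psiCS β = psiReg β 0 := by
  have hp : 1 - β ≠ 0 := sub_ne_zero.2 hβ.symm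
  funext y
  rcases lt_trichotomy y 0 with hy | rfl | hy
  · simp [psiCS, psiReg, Real.sign_of_neg hy, abs_of_neg hy, max_eq_right hy.le,
      max_eq_left (neg_nonneg.2 hy.le), zero_rpow hp, neg_div]
  · simp [psiCS, psiReg]
  · simp [psiCS, psiReg, Real.sign_of_pos hy, abs_of_pos hy, max_eq_left hy.le,
      max_eq_right (neg_nonpos.2 hy.le), zero_rpow hp]

lemma psiReg_neg (β δ y : ℝ) : psiReg β δ (-y) = -psiReg β δ y := by
  simp only [psiReg, neg_neg]
  ring

lemma monotone_psiReg (hδ : 0 ≤ δ) (hβ : β < 1) : Monotone (psiReg β δ) := fun a b hab => by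
  have hp : 0 < 1 - β := by linarith
  exact div_le_div_of_nonneg_right (sub_le_sub (monotone_max_rpow hδ hp.le hab)
    (monotone_max_rpow hδ hp.le (neg_le_neg hab))) hp.le

lemma uniformContinuous_psiReg (hδ : 0 ≤ δ) (hβ0 : 0 ≤ β) (hβ1 : β < 1) :
    UniformContinuous (psiReg β δ) := by
  have h := uniformContinuous_max_rpow hδ (p := 1 - β) (by linarith) (by linarith)
  have := (h.sub (h.comp _root_.uniformContinuous_neg)).const_smul (1 - β)⁻¹
  convert this using 1
  ext y
  simp [psiReg, div_eq_inv_mul]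

lemma lipschitzWith_psiReg (hδ : 0 < δ) (hβ0 : 0 ≤ β) (hβ1 : β < 1) :
    LipschitzWith (2 * δ ^ (-β)).toNNReal (psiReg β δ) := by
  have hp : 0 < 1 - β := by linarith
  have hA (a b : ℝ) : |max a δ ^ (1 - β) - max b δ ^ (1 - β)| ≤ (1 - β) * δ ^ (-β) * |a - b| := by
    simpa using abs_max_rpow_sub_max_rpow_le hδ hp.le (by linarith) a b
  refine LipschitzWith.of_dist_le_mul fun a b => ?_
  rw [Real.coe_toNNReal _ (by positivity), Real.dist_eq, Real.dist_eq, psiReg, psiReg, ← sub_div,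
    abs_div, abs_of_pos hp, div_le_iff₀ hp]
  have h₂ := hA (-a) (-b)
  rw [neg_sub_neg, abs_sub_comm b] at h₂
  calc _ = |(max a δ ^ (1 - β) - max b δ ^ (1 - β))
        - (max (-a) δ ^ (1 - β) - max (-b) δ ^ (1 - β))| := by congr 1; ring
    _ ≤ _ := abs_sub _ _
    _ ≤ _ := by linarith [hA a b]

lemma abs_psiReg_sub_psiReg_zero_le (hδ : 0 ≤ δ) (hβ : β < 1) (y : ℝ) :
    |psiReg β δ y - psiReg β 0 y| ≤ δ ^ (1 - β) / (1 - β) := by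
  have hp : 0 < 1 - β := by linarith
  obtain ⟨h₁, h₂⟩ := max_rpow_sub_max_zero_rpow_mem_Icc hδ hp.le y
  obtain ⟨h₃, h₄⟩ := max_rpow_sub_max_zero_rpow_mem_Icc hδ hp.le (-y)
  rw [psiReg, psiReg, ← sub_div, abs_div, abs_of_pos hp]
  gcongr
  rw [abs_le]
  constructor <;> linarith

lemma tendstoUniformly_psiReg (hβ : β < 1) {δ : ℕ → ℝ} (hδ₀ : ∀ n, 0 ≤ δ n)
    (hδ : Tendsto δ atTop (𝓝 0)) : TendstoUniformly (fun n => psiReg β (δ n)) (psiCS β) atTop := by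
  have hp : 0 < 1 - β := by linarith
  have hη : Tendsto (fun n => δ n ^ (1 - β) / (1 - β)) atTop (𝓝 0) := by
    simpa [zero_rpow hp.ne'] using (hδ.rpow_const (Or.inr hp.le)).div_const (1 - β)
  rw [Metric.tendstoUniformly_iff]
  intro ε hε
  filter_upwards [hη.eventually (gt_mem_nhds hε)] with n hn y
  rw [psiCS_eq_psiReg_zero hβ.ne, Real.dist_eq, abs_sub_comm]
  exact (abs_psiReg_sub_psiReg_zero_le (hδ₀ n) hβ y).trans_lt hn

end PsiReg

lemma Finset.sum_sum_nonpos_of_add_swap_nonpos {ι : Type*} [Fintype ι] {f : ι → ι → ℝ}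
    (h : ∀ i k, f i k + f k i ≤ 0) : ∑ i, ∑ k, f i k ≤ 0 := by
  have h2 : 2 * ∑ i, ∑ k, f i k = ∑ i, ∑ k, (f i k + f k i) := by
    rw [two_mul]
    nth_rw 2 [Finset.sum_comm]
    simp only [← Finset.sum_add_distrib]
  linarith [Finset.sum_nonpos fun i (_ : i ∈ Finset.univ) =>
    Finset.sum_nonpos fun k (_ : k ∈ Finset.univ) => h i k]

section Field

noncomputable def csField (N : ℕ) (κ : ℝ) (ν : Fin N → ℝ) (g : ℝ → ℝ) (x : Fin N → ℝ) :
    Fin N → ℝ := fun i => ν i + κ / N * ∑ k, g (x k - x i)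

variable {N : ℕ} {κ : ℝ} {ν : Fin N → ℝ}

lemma abs_sub_sub_sub_le_two_mul_dist (x y : Fin N → ℝ) (i k : Fin N) :
    |(x k - x i) - (y k - y i)| ≤ 2 * dist x y := by
  have hk := (Real.dist_eq _ _).symm.le.trans (dist_le_pi_dist x y k)
  have hi := (Real.dist_eq _ _).symm.le.trans (dist_le_pi_dist x y i)
  calc |(x k - x i) - (y k - y i)| = |(x k - y k) - (x i - y i)| := by ring_nf
    _ ≤ |x k - y k| + |x i - y i| := abs_sub _ _
    _ ≤ 2 * dist x y := by linarith

lemma abs_csField_sub_csField_le {g₁ g₂ : ℝ → ℝ} {x y : Fin N → ℝ} {i : Fin N} {c : ℝ}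
    (hκ : 0 ≤ κ) (hc : 0 ≤ c) (h : ∀ k, |g₁ (x k - x i) - g₂ (y k - y i)| ≤ c) :
    |csField N κ ν g₁ x i - csField N κ ν g₂ y i| ≤ κ * c := by
  have hsum : |∑ k, (g₁ (x k - x i) - g₂ (y k - y i))| ≤ N * c := by
    have := (Finset.abs_sum_le_sum_abs _ Finset.univ).trans (Finset.sum_le_sum fun k _ => h k)
    rwa [Finset.sum_const, Finset.card_univ, Fintype.card_fin, nsmul_eq_mul] at this
  calc |csField N κ ν g₁ x i - csField N κ ν g₂ y i|
        = κ / N * |∑ k, (g₁ (x k - x i) - g₂ (y k - y i))| := by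
          rw [csField, csField, Finset.sum_sub_distrib, add_sub_add_left_eq_sub, ← mul_sub,
            abs_mul, abs_of_nonneg (by positivity)]
    _ ≤ κ / N * (N * c) := by gcongr
    _ = N / N * (κ * c) := by ring
    _ ≤ κ * c := mul_le_of_le_one_left (mul_nonneg hκ hc) (div_self_le_one _)

lemma dist_csField_lt {g₁ g₂ : ℝ → ℝ} {x y : Fin N → ℝ} {ε : ℝ} (hκ : 0 ≤ κ) (hε : 0 < ε)
    (h : ∀ i k, |g₁ (x k - x i) - g₂ (y k - y i)| < ε / (κ + 1)) :
    dist (csField N κ ν g₁ x) (csField N κ ν g₂ y) < ε := by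
  refine (dist_pi_lt_iff hε).2 fun i => ?_
  rw [Real.dist_eq]
  calc _ ≤ κ * (ε / (κ + 1)) := abs_csField_sub_csField_le hκ (by positivity) fun k => (h i k).le
    _ < (κ + 1) * (ε / (κ + 1)) := by gcongr; linarith
    _ = ε := mul_div_cancel₀ ε (by positivity)

lemma dissipative_csField {g : ℝ → ℝ} (hg : Monotone g) (hodd : ∀ y, g (-y) = -g y)
    (hκ : 0 ≤ κ) : Dissipative (csField N κ ν g) := by
  intro p q
  -- oddness makes the `(k, i)` term `(q k - q i) - (p k - p i)` times the same increment of `g`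
  have hswap : ∀ i k, (p i - q i) * (g (p k - p i) - g (q k - q i))
      + (p k - q k) * (g (p i - p k) - g (q i - q k)) ≤ 0 := by
    intro i k
    rw [show p i - p k = -(p k - p i) by ring, show q i - q k = -(q k - q i) by ring, hodd, hodd]
    rcases le_total (p k - p i) (q k - q i) with h | h <;> nlinarith [hg h]
  calc ∑ i, (p i - q i) * (csField N κ ν g p i - csField N κ ν g q i)
        = κ / N * ∑ i, ∑ k, (p i - q i) * (g (p k - p i) - g (q k - q i)) := by
          rw [Finset.mul_sum]
          refine Finset.sum_congr rfl fun i _ => ?_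
          rw [csField, csField, add_sub_add_left_eq_sub, ← mul_sub, ← Finset.sum_sub_distrib,
            ← Finset.mul_sum]
          ring
    _ ≤ 0 := mul_nonpos_of_nonneg_of_nonpos (by positivity)
          (Finset.sum_sum_nonpos_of_add_swap_nonpos hswap)

lemma lipschitzWith_csField {g : ℝ → ℝ} {L : ℝ≥0} (hg : LipschitzWith L g) (hκ : 0 ≤ κ) :
    LipschitzWith (2 * κ * L).toNNReal (csField N κ ν g) := by
  refine LipschitzWith.of_dist_le_mul fun x y => ?_
  rw [Real.coe_toNNReal _ (by positivity), dist_pi_le_iff (by positivity)]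
  intro i
  rw [Real.dist_eq]
  calc _ ≤ κ * (L * (2 * dist x y)) := abs_csField_sub_csField_le hκ (by positivity) fun k =>
        (Real.dist_eq _ _ ▸ hg.dist_le_mul _ _).trans
          (by rw [Real.dist_eq]; gcongr; exact abs_sub_sub_sub_le_two_mul_dist x y i k)
    _ = 2 * κ * L * dist x y := by ring

lemma uniformContinuous_csField {g : ℝ → ℝ} (hg : UniformContinuous g) (hκ : 0 ≤ κ) :
    UniformContinuous (csField N κ ν g) := by
  rw [Metric.uniformContinuous_iff] at hg ⊢
  intro ε hε
  obtain ⟨δ, hδ, hgδ⟩ := hg (ε / (κ + 1)) (by positivity)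
  refine ⟨δ / 2, by positivity, fun {x y} hxy => dist_csField_lt hκ hε fun i k => ?_⟩
  rw [← Real.dist_eq]
  refine hgδ ?_
  rw [Real.dist_eq]
  linarith [abs_sub_sub_sub_le_two_mul_dist x y i k]

lemma tendstoUniformly_csField {g : ℕ → ℝ → ℝ} {g₀ : ℝ → ℝ} (hg : TendstoUniformly g g₀ atTop)
    (hκ : 0 ≤ κ) :
    TendstoUniformly (fun n => csField N κ ν (g n)) (csField N κ ν g₀) atTop := by
  rw [Metric.tendstoUniformly_iff] at hg ⊢
  intro ε hε
  filter_upwards [hg (ε / (κ + 1)) (by positivity)] with n hn x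
  exact dist_csField_lt hκ hε fun i k => Real.dist_eq _ _ ▸ hn _

end Field

section CuckerSmale

variable {N : ℕ} {β κ : ℝ} {ν : Fin N → ℝ} {x y : ℝ → Fin N → ℝ}

lemma IsCSSol.isIntegralCurveOn (hx : IsCSSol N β κ ν x) :
    IsIntegralCurveOn x (fun _ => csField N κ ν (psiCS β)) (Ici 0) :=
  fun t ht => hasDerivWithinAt_pi.2 fun i => hx.2 i t ht

lemma IsCSSol.of_isIntegralCurveOn (hF : Continuous (csField N κ ν (psiCS β)))
    (hx : IsIntegralCurveOn x (fun _ => csField N κ ν (psiCS β)) (Ici 0)) :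
    IsCSSol N β κ ν x := by
  have hcomp i : ∀ t ∈ Ici (0 : ℝ), HasDerivWithinAt (fun s => x s i)
      (csField N κ ν (psiCS β) (x t) i) (Ici 0) t := fun t ht => hasDerivWithinAt_pi.1 (hx t ht) i
  refine ⟨fun i => (contDiffOn_one_iff_derivWithin (uniqueDiffOn_Ici 0)).2
    ⟨fun t ht => (hcomp i t ht).differentiableWithinAt, ?_⟩, fun i t ht => hcomp i t ht⟩
  exact (((continuous_apply i).comp hF).comp_continuousOn hx.continuousOn).congr fun t ht =>
    (hcomp i t ht).derivWithin (uniqueDiffOn_Ici 0 t ht)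

theorem exists_isCSSol (hβ0 : 0 ≤ β) (hβ1 : β < 1) (hκ : 0 ≤ κ) (X0 : Fin N → ℝ) :
    ∃ x, IsCSSol N β κ ν x ∧ x 0 = X0 := by
  have hδ : ∀ n : ℕ, 0 < 1 / ((n : ℝ) + 1) := fun n => by positivity
  have hF : UniformContinuous (csField N κ ν (psiCS β)) := uniformContinuous_csField
    (psiCS_eq_psiReg_zero hβ1.ne ▸ uniformContinuous_psiReg le_rfl hβ0 hβ1) hκ
  obtain ⟨x, hx0, hx⟩ := exists_isIntegralCurveOn_Ici_of_dissipative_approx hF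
    (tendstoUniformly_csField (tendstoUniformly_psiReg hβ1 (fun n => (hδ n).le)
      tendsto_one_div_add_atTop_nhds_zero_nat) hκ)
    (fun n => lipschitzWith_csField (lipschitzWith_psiReg (hδ n) hβ0 hβ1) hκ)
    (fun n => dissipative_csField (monotone_psiReg (hδ n).le hβ1) (psiReg_neg β _) hκ) X0
  exact ⟨x, .of_isIntegralCurveOn hF.continuous hx, hx0⟩

theorem IsCSSol.eqOn_Ici (hβ : β < 1) (hκ : 0 ≤ κ) (hx : IsCSSol N β κ ν x)
    (hy : IsCSSol N β κ ν y) (h0 : x 0 = y 0) : EqOn x y (Ici 0) := by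
  intro t ht
  have hdiss : Dissipative (csField N κ ν (psiCS β)) := psiCS_eq_psiReg_zero hβ.ne ▸
    dissipative_csField (monotone_psiReg le_rfl hβ) (psiReg_neg β 0) hκ
  have h := sum_sq_sub_le_of_dissipative hdiss (ε := 0) (fun _ _ => by simp)
    hx.isIntegralCurveOn hy.isIntegralCurveOn h0 ht
  rw [zero_mul, exp_zero, sub_self, mul_zero] at h
  have hsq := (Finset.sum_eq_zero_iff_of_nonneg fun i _ => sq_nonneg (x t i - y t i)).1
    (le_antisymm h (Finset.sum_nonneg fun i _ => sq_nonneg _))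
  funext i
  exact sub_eq_zero.1 (pow_eq_zero_iff two_ne_zero |>.1 (hsq i (Finset.mem_univ i)))

end CuckerSmale

theorem stmt0_general (N : ℕ) (β κ : ℝ) (hβ0 : 0 < β) (hβ1 : β < 1)
    (hκ : 0 < κ) (ν : Fin N → ℝ) (X0 : Fin N → ℝ) :
    (∃ x : ℝ → Fin N → ℝ, IsCSSol N β κ ν x ∧ x 0 = X0) ∧
    (∀ x y : ℝ → Fin N → ℝ, IsCSSol N β κ ν x → IsCSSol N β κ ν y →
      x 0 = X0 → y 0 = X0 → ∀ t ≥ (0:ℝ), x t = y t) :=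
  ⟨exists_isCSSol hβ0.le hβ1 hκ.le X0, fun _ _ hx hy hx0 hy0 _ ht =>
    hx.eqOn_Ici hβ1 hκ.le hy (hx0.trans hy0.symm) ht⟩

/-- Existence and uniqueness of the C¹ solution for every initial configuration. -/
theorem stmt0 (N : ℕ) (hN : 2 ≤ N) (β κ : ℝ) (hβ0 : 0 < β) (hβ1 : β < 1)
    (hκ : 0 < κ) (ν : Fin N → ℝ) (X0 : Fin N → ℝ) :
    (∃ x : ℝ → Fin N → ℝ, IsCSSol N β κ ν x ∧ x 0 = X0) ∧
    (∀ x y : ℝ → Fin N → ℝ, IsCSSol N β κ ν x → IsCSSol N β κ ν y →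
      x 0 = X0 → y 0 = X0 → ∀ t ≥ (0:ℝ), x t = y t) :=
  stmt0_general N β κ hβ0 hβ1 hκ ν X0
end

section
/- Let x be a C¹ solution of the first-order singular Cucker–Smale system and let i ≠ j be indices with x_i(0) < x_j(0) and ν_i < ν_j. Then the i-th and j-th particles never collide: x_i(t) ≠ x_j(t) for every t > 0 (in fact x_i(t) < x_j(t) for all t ≥ 0). -/
open Real Filter Set

/-!
The gap `u = x_j - x_i` starts positive. At any time where the two particles meet, they see the
same configuration, so their interaction terms coincide and `u' = ν_j - ν_i > 0` there. A function
that is increasing at each of its zeros cannot go from positive to nonpositive: the fencing theorem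
gives `u ≥ 0`, and at a zero `t > 0` the minimum of `u` on `[0, t]` would force `u'(t) ≤ 0`.
-/

theorem IsMinOn.hasDerivWithinAt_nonpos_of_right {u : ℝ → ℝ} {c a b : ℝ} (hab : a < b)
    (hmin : IsMinOn u (Icc a b) b) (hu : HasDerivWithinAt u c (Icc a b) b) : c ≤ 0 := by
  have hcone : a - b ∈ posTangentConeAt (Icc a b) b :=
    sub_mem_posTangentConeAt_of_segment_subset (by rw [segment_symm, segment_eq_Icc hab.le])
  have hslope : 0 ≤ (a - b) * c := by
    simpa only [ContinuousLinearMap.toSpanSingleton_apply, smul_eq_mul]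
      using hmin.localize.hasFDerivWithinAt_nonneg hu hcone
  exact nonpos_of_mul_nonneg_right hslope (sub_neg.2 hab)

theorem pos_of_hasDerivWithinAt_pos_of_eq_zero {u u' : ℝ → ℝ} {a : ℝ}
    (hu : ∀ t ≥ a, HasDerivWithinAt u (u' t) (Ici a) t) (ha : 0 < u a)
    (hzero : ∀ t > a, u t = 0 → 0 < u' t) : ∀ t ≥ a, 0 < u t := by
  have hcont : ContinuousOn u (Ici a) := fun t ht => (hu t ht).continuousWithinAt
  have hnonneg : ∀ t ≥ a, 0 ≤ u t := fun t ht =>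
    image_le_of_deriv_right_lt_deriv_boundary' continuousOn_const
      (fun _ _ => hasDerivWithinAt_const _ _ 0) ha.le (hcont.mono Icc_subset_Ici_self)
      (fun s hs => (hu s hs.1).mono (Ici_subset_Ici.2 hs.1))
      (fun s hs hs0 => hzero s (lt_of_le_of_ne hs.1 (by rintro rfl; linarith)) hs0.symm)
      ⟨ht, le_rfl⟩
  intro t ht
  refine lt_of_le_of_ne (hnonneg t ht) fun hut => ?_
  have hat : a < t := lt_of_le_of_ne ht (by rintro rfl; linarith)
  have hmin : IsMinOn u (Icc a t) t := fun s hs => by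
    simpa only [mem_ofPred_eq, ← hut] using hnonneg s hs.1
  exact (hzero t hat hut.symm).not_ge <|
    hmin.hasDerivWithinAt_nonpos_of_right hat ((hu t ht).mono Icc_subset_Ici_self)

theorem IsCSSol.hasDerivWithinAt_sub {N : ℕ} {β κ : ℝ} {ν : Fin N → ℝ} {x : ℝ → Fin N → ℝ}
    (hx : IsCSSol N β κ ν x) (i j : Fin N) {t : ℝ} (ht : 0 ≤ t) :
    HasDerivWithinAt (fun s => x s j - x s i)
      (ν j - ν i + κ / N * (∑ k, psiCS β (x t k - x t j) - ∑ k, psiCS β (x t k - x t i)))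
      (Ici 0) t :=
  ((hx.2 j t ht).sub (hx.2 i t ht)).congr_deriv (by ring)

theorem stmt1_general (N : ℕ) (β κ : ℝ)
    (ν : Fin N → ℝ) (x : ℝ → Fin N → ℝ) (hx : IsCSSol N β κ ν x)
    (i j : Fin N) (h0 : x 0 i < x 0 j) (hν : ν i < ν j) :
    (∀ t > (0:ℝ), x t i ≠ x t j) ∧ (∀ t ≥ (0:ℝ), x t i < x t j) := by
  have hgap : ∀ t ≥ (0:ℝ), 0 < x t j - x t i := by
    refine pos_of_hasDerivWithinAt_pos_of_eq_zero (fun t ht => hx.hasDerivWithinAt_sub i j ht)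
      (sub_pos.2 h0) fun t _ hmeet => ?_
    rw [sub_eq_zero.1 hmeet, sub_self, mul_zero, add_zero]
    exact sub_pos.2 hν
  exact ⟨fun t ht => (sub_pos.1 (hgap t ht.le)).ne, fun t ht => sub_pos.1 (hgap t ht)⟩

/-- If `ν_i < ν_j` and initially `x_i(0) < x_j(0)`, the two particles never collide. -/
theorem stmt1 (N : ℕ) (hN : 2 ≤ N) (β κ : ℝ) (hβ0 : 0 < β) (hβ1 : β < 1)
    (hκ : 0 < κ) (ν : Fin N → ℝ) (x : ℝ → Fin N → ℝ) (hx : IsCSSol N β κ ν x)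
    (i j : Fin N) (hij : i ≠ j) (h0 : x 0 i < x 0 j) (hν : ν i < ν j) :
    (∀ t > (0:ℝ), x t i ≠ x t j) ∧ (∀ t ≥ (0:ℝ), x t i < x t j) :=
  stmt1_general N β κ ν x hx i j h0 hν
end

section
/- Let x be a C¹ solution of the first-order singular Cucker–Smale system and let i ≠ j be indices with x_i(0) < x_j(0) and ν_i > ν_j. Then the i-th and j-th particles collide exactly once: there is exactly one t_* ∈ (0, ∞) with x_i(t_*) = x_j(t_*). -/
/-!
Let `u = x_j − x_i`. Since `Ψ` is nondecreasing, whenever `x_i ≤ x_j` every interaction term pushes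
particle `i` at least as hard to the right as particle `j`, so `u' ≤ ν_j − ν_i < 0` wherever
`u ≥ 0`. Starting from `u(0) > 0`, `u` therefore decreases at a definite rate until it vanishes,
and at each zero it crosses strictly into `u < 0`, from where it can never return to `0`.
-/

open Real Filter Set

lemma psiCS_neg (β y : ℝ) : psiCS β (-y) = -psiCS β y := by
  simp only [psiCS, Real.sign_neg, abs_neg, neg_mul, neg_div]

lemma psiCS_of_nonneg {β y : ℝ} (hβ : β < 1) (hy : 0 ≤ y) :
    psiCS β y = y ^ (1 - β) / (1 - β) := by
  rcases hy.eq_or_lt with rfl | hy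
  · simp [psiCS, Real.zero_rpow (sub_pos.2 hβ).ne']
  · rw [psiCS, Real.sign_of_pos hy, abs_of_pos hy, one_mul]

lemma monotone_psiCS {β : ℝ} (hβ : β < 1) : Monotone (psiCS β) := by
  have hIci : MonotoneOn (psiCS β) (Ici 0) := fun y hy z hz hyz => by
    rw [psiCS_of_nonneg hβ hy, psiCS_of_nonneg hβ hz]
    have := sub_pos.2 hβ
    gcongr
  refine MonotoneOn.Iic_union_Ici (fun y hy z hz hyz => ?_) hIci
  have := hIci (mem_Ici.2 (neg_nonneg.2 hz)) (mem_Ici.2 (neg_nonneg.2 hy)) (neg_le_neg hyz)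
  rwa [psiCS_neg, psiCS_neg, neg_le_neg_iff] at this

noncomputable def csVelocity (N : ℕ) (β κ : ℝ) (ν : Fin N → ℝ) (y : Fin N → ℝ) (i : Fin N) : ℝ :=
  ν i + (κ / N) * ∑ k, psiCS β (y k - y i)

lemma csVelocity_sub_le {N : ℕ} {β κ : ℝ} (hβ : β < 1) (hκ : 0 ≤ κ) (ν : Fin N → ℝ)
    {y : Fin N → ℝ} {i j : Fin N} (hy : y i ≤ y j) :
    csVelocity N β κ ν y j - csVelocity N β κ ν y i ≤ ν j - ν i := by
  have hsum : ∑ k, psiCS β (y k - y j) ≤ ∑ k, psiCS β (y k - y i) :=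
    Finset.sum_le_sum fun k _ => monotone_psiCS hβ (by linarith)
  have := mul_le_mul_of_nonneg_left hsum (div_nonneg hκ (Nat.cast_nonneg N))
  simp only [csVelocity]
  linarith

lemma nonneg_of_isMaxOn_Icc_right {f : ℝ → ℝ} {f' a b : ℝ} (hab : a < b) (hf : HasDerivAt f f' b)
    (hmax : IsMaxOn f (Icc a b) b) : 0 ≤ f' := by
  have hcone : a - b ∈ posTangentConeAt (Icc a b) b :=
    sub_mem_posTangentConeAt_of_segment_subset (by rw [segment_symm, segment_eq_Icc hab.le])
  have := hmax.localize.hasFDerivWithinAt_nonpos hf.hasFDerivAt.hasFDerivWithinAt hcone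
  simp only [ContinuousLinearMap.toSpanSingleton_apply, smul_eq_mul] at this
  nlinarith

section ZeroCrossing

variable {f f' : ℝ → ℝ}

lemma lt_zero_of_deriv_neg_of_nonneg {a b : ℝ} (hab : a < b)
    (hf : ∀ t ∈ Icc a b, HasDerivAt f (f' t) t) (hf' : ∀ t ∈ Icc a b, 0 ≤ f t → f' t < 0)
    (ha : f a ≤ 0) : f b < 0 := by
  by_contra! hb
  have hbmem : b ∈ Icc a b := right_mem_Icc.2 hab.le
  obtain ⟨p, hp, hmax⟩ := isCompact_Icc.exists_isMaxOn (nonempty_Icc.2 hab.le)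
    fun t ht => (hf t ht).continuousAt.continuousWithinAt
  -- A maximum of `f` on `[a, b]` is either attained at `b` or is an interior critical point.
  rcases (show f b ≤ f p from hmax hbmem).eq_or_lt with hpb | hpb
  · have hbmax : IsMaxOn f (Icc a b) b :=
      fun t ht => (show f t ≤ f p from hmax ht).trans_eq hpb.symm
    exact (hf' b hbmem hb).not_ge (nonneg_of_isMaxOn_Icc_right hab (hf b hbmem) hbmax)
  · have hpIoo : p ∈ Ioo a b :=
      ⟨hp.1.lt_of_ne (by rintro rfl; linarith), hp.2.lt_of_ne (by rintro rfl; linarith)⟩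
    have hloc : IsLocalMax f p := hmax.isLocalMax (Icc_mem_nhds hpIoo.1 hpIoo.2)
    exact (hf' p hp (hb.trans hpb.le)).ne (hloc.hasDerivAt_eq_zero (hf p hp))

lemma exists_zero_of_deriv_le_neg_of_nonneg {a c : ℝ} (hc : 0 < c) (hfa : 0 < f a)
    (hcont : ContinuousOn f (Ici a)) (hf : ∀ t ∈ Ioi a, HasDerivAt f (f' t) t)
    (hf' : ∀ t ∈ Ioi a, 0 ≤ f t → f' t ≤ -c) : ∃ t ∈ Ioi a, f t = 0 := by
  -- `b` is where the linear bound `f a - c (t - a)` reaches `0`.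
  set b := a + f a / c
  have hab : a < b := lt_add_of_pos_right a (div_pos hfa hc)
  have hsign : ∃ t ∈ Icc a b, f t ≤ 0 := by
    by_contra! hpos
    obtain ⟨ξ, hξ, hslope⟩ := exists_hasDerivAt_eq_slope f f' hab
      (hcont.mono Icc_subset_Ici_self) fun t ht => hf t ht.1
    have hξle := hf' ξ hξ.1 (hpos ξ (Ioo_subset_Icc_self hξ)).le
    rw [hslope, div_le_iff₀ (sub_pos.2 hab)] at hξle
    have : -c * (b - a) = -f a := by simp only [b, add_sub_cancel_left]; field_simp
    linarith [hpos b (right_mem_Icc.2 hab.le)]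
  obtain ⟨t, ht, hft⟩ := hsign
  obtain ⟨s, hs, hfs⟩ := intermediate_value_Icc' ht.1
    (hcont.mono fun y hy => hy.1) ⟨hft, hfa.le⟩
  exact ⟨s, hs.1.lt_of_ne (by rintro rfl; linarith), hfs⟩

end ZeroCrossing

theorem stmt2_general (N : ℕ) (β κ : ℝ) (hβ1 : β < 1)
    (hκ : 0 < κ) (ν : Fin N → ℝ) (x : ℝ → Fin N → ℝ) (hx : IsCSSol N β κ ν x)
    (i j : Fin N) (h0 : x 0 i < x 0 j) (hν : ν j < ν i) :
    ∃! t : ℝ, 0 < t ∧ x t i = x t j := by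
  set u : ℝ → ℝ := fun t => x t j - x t i
  set u' : ℝ → ℝ := fun t => csVelocity N β κ ν (x t) j - csVelocity N β κ ν (x t) i
  have hu : ∀ t ≥ 0, HasDerivWithinAt u (u' t) (Ici 0) t :=
    fun t ht => (hx.2 j t ht).sub (hx.2 i t ht)
  have hu_at : ∀ t > 0, HasDerivAt u (u' t) t :=
    fun t ht => (hu t ht.le).hasDerivAt (Ici_mem_nhds ht)
  have hdrift : ∀ t, 0 ≤ u t → u' t ≤ -(ν i - ν j) := fun t ht => by
    linarith [csVelocity_sub_le hβ1 hκ.le ν (sub_nonneg.1 ht)]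
  have hcross : ∀ t₁ t₂, 0 < t₁ → t₁ < t₂ → u t₁ = 0 → u t₂ < 0 := fun t₁ t₂ h₁ h₁₂ hz =>
    lt_zero_of_deriv_neg_of_nonneg h₁₂ (fun t ht => hu_at t (h₁.trans_le ht.1))
      (fun t _ hut => (hdrift t hut).trans_lt (by linarith)) hz.le
  obtain ⟨t₀, ht₀, hz₀⟩ := exists_zero_of_deriv_le_neg_of_nonneg (f := u) (a := 0)
    (sub_pos.2 hν) (sub_pos.2 h0) (fun t ht => (hu t ht).continuousWithinAt) hu_at
    (fun t _ => hdrift t)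
  refine ⟨t₀, ⟨ht₀, (sub_eq_zero.1 hz₀).symm⟩, fun t ⟨ht, hxt⟩ => ?_⟩
  have hz : u t = 0 := sub_eq_zero.2 hxt.symm
  rcases lt_trichotomy t t₀ with h | h | h
  · exact absurd hz₀ (hcross t t₀ ht h hz).ne
  · exact h
  · exact absurd hz (hcross t₀ t ht₀ h hz₀).ne

/-- If `ν_i > ν_j` and initially `x_i(0) < x_j(0)`, the two particles collide exactly once. -/
theorem stmt2 (N : ℕ) (hN : 2 ≤ N) (β κ : ℝ) (hβ0 : 0 < β) (hβ1 : β < 1)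
    (hκ : 0 < κ) (ν : Fin N → ℝ) (x : ℝ → Fin N → ℝ) (hx : IsCSSol N β κ ν x)
    (i j : Fin N) (hij : i ≠ j) (h0 : x 0 i < x 0 j) (hν : ν j < ν i) :
    ∃! t : ℝ, 0 < t ∧ x t i = x t j :=
  stmt2_general N β κ hβ1 hκ ν x hx i j h0 hν
end
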